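/- arXiv:2311.08408 — 8 statements merged into one kernel-verified Lean document; each statement's English description precedes it below -/
import Mathlib

section
/- If g ≺' (d, a) and a ≺ â (ordinary majorization of integer sequences of the same length s), then g ≺' (d, â). -/
/-- Generalized majorization `g ≺' (d, a)` for 1-indexed integer sequences:
`d` of length `m`, `a` of length `s`, `g` of length `m + s`.
Conventions `d i = +∞` for `i < 1` and `d (m+1) = -∞` are encoded in the
definition of the set whose infimum is `h j`. -/
def GenMaj (m s : ℕ) (d a g : ℕ → ℤ) : Prop :=
  (∀ i, 1 ≤ i → i ≤ m → g (i + s) ≤ d i) ∧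
  (∀ j, 1 ≤ j → j ≤ s →
    ∑ i ∈ Finset.Icc 1 (sInf {i : ℕ | j ≤ i ∧ (m < i - j + 1 ∨ d (i - j + 1) < g i)}), g i
      - ∑ i ∈ Finset.Icc 1
          (sInf {i : ℕ | j ≤ i ∧ (m < i - j + 1 ∨ d (i - j + 1) < g i)} - j), d i
      ≤ ∑ i ∈ Finset.Icc 1 j, a i) ∧
  (∑ i ∈ Finset.Icc 1 (m + s), g i
    = ∑ i ∈ Finset.Icc 1 m, d i + ∑ i ∈ Finset.Icc 1 s, a i)

theorem stmt2_general (m s : ℕ) (d a ahat g : ℕ → ℤ)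
    (hmaj : GenMaj m s d a g)
    (hpart : ∀ k, 1 ≤ k → k ≤ s - 1 →
      ∑ i ∈ Finset.Icc 1 k, a i ≤ ∑ i ∈ Finset.Icc 1 k, ahat i)
    (htot : ∑ i ∈ Finset.Icc 1 s, a i = ∑ i ∈ Finset.Icc 1 s, ahat i) :
    GenMaj m s d ahat g := by
  obtain ⟨hdg, hbound, hsum⟩ := hmaj
  refine ⟨hdg, fun j hj hjs => ?_, by rw [hsum, htot]⟩
  have hprefix : ∑ i ∈ Finset.Icc 1 j, a i ≤ ∑ i ∈ Finset.Icc 1 j, ahat i := by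
    rcases (show j = s ∨ j ≤ s - 1 by omega) with rfl | hj'
    · exact htot.le
    · exact hpart j hj hj'
  exact (hbound j hj hjs).trans hprefix

/-- If `g ≺' (d, a)` and `a ≺ â` (ordinary majorization), then `g ≺' (d, â)`. -/
theorem stmt2 (m s : ℕ) (d a ahat g : ℕ → ℤ)
    (hd : ∀ i, 1 ≤ i → i < m → d (i + 1) ≤ d i)
    (ha : ∀ i, 1 ≤ i → i < s → a (i + 1) ≤ a i)
    (hahat : ∀ i, 1 ≤ i → i < s → ahat (i + 1) ≤ ahat i)
    (hg : ∀ i, 1 ≤ i → i < m + s → g (i + 1) ≤ g i)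
    (hmaj : GenMaj m s d a g)
    (hpart : ∀ k, 1 ≤ k → k ≤ s - 1 →
      ∑ i ∈ Finset.Icc 1 k, a i ≤ ∑ i ∈ Finset.Icc 1 k, ahat i)
    (htot : ∑ i ∈ Finset.Icc 1 s, a i = ∑ i ∈ Finset.Icc 1 s, ahat i) :
    GenMaj m s d ahat g :=
  stmt2_general m s d a ahat g hmaj hpart htot
end

section
/- For any non-increasing integer sequences u = (u_1, …, u_p) and b = (b_1, …, b_y), the decreasingly ordered union u ∪ b (the multiset union of the entries, sorted in non-increasing order) satisfies the generalized majorization u ∪ b ≺' (u, b). -/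
/-! Put `t := g (h j)`. Minimality of `h j` gives `u 1, …, u (h j - j) ≥ t > u (h j - j + 1)`,
and counting the entries `≥ t` and `> t` of `g = u ∪ b` then forces `b j = t`. So the first
`h j` entries of `g` are `u 1, …, u (h j - j), b 1, …, b j` up to ties at the value `t`, and the
second condition holds with equality. The first condition is the same count for
`t := g (i + y)`. -/

open Finset

lemma antitoneOn_Icc_one_of_succ_le {α : Type*} [Preorder α] {f : ℕ → α} {n : ℕ}
    (hf : ∀ i, 1 ≤ i → i < n → f (i + 1) ≤ f i) : AntitoneOn f (Set.Icc 1 n) :=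
  antitoneOn_of_add_one_le Set.ordConnected_Icc fun a _ ha ha' => hf a ha.1 (by grind)

lemma le_card_filter_iff {α : Type*} [Preorder α] {f : ℕ → α} {n k : ℕ}
    (hf : AntitoneOn f (Set.Icc 1 n)) {P : α → Prop} [DecidablePred P] (hP : Monotone P)
    (hk1 : 1 ≤ k) (hkn : k ≤ n) : P (f k) ↔ k ≤ #{i ∈ Icc 1 n | P (f i)} := by
  constructor
  · intro hk
    have hsub : Icc 1 k ⊆ {i ∈ Icc 1 n | P (f i)} := fun i hi => by
      simp only [mem_Icc, mem_filter] at hi ⊢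
      have hin : i ∈ Set.Icc 1 n := ⟨hi.1, hi.2.trans hkn⟩
      exact ⟨hin, hP (hf hin ⟨hk1, hkn⟩ hi.2) hk⟩
    simpa using card_le_card hsub
  · intro hk
    by_contra hnk
    have hsub : {i ∈ Icc 1 n | P (f i)} ⊆ Icc 1 (k - 1) := fun i hi => by
      simp only [mem_Icc, mem_filter] at hi ⊢
      refine ⟨hi.1.1, ?_⟩
      by_contra hik
      exact hnk (hP (hf ⟨hk1, hkn⟩ hi.1 (by omega)) hi.2)
    have := card_le_card hsub
    simp at this
    omega

lemma sum_add_card_filter_lt_nsmul {ι M : Type*} [AddCommMonoid M] [LinearOrder M]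
    {s A : Finset ι} {f : ι → M} {t : M} (hA : A ⊆ s) (hge : ∀ i ∈ A, t ≤ f i)
    (hle : ∀ i ∈ s, i ∉ A → f i ≤ t) :
    ∑ i ∈ A, f i + #{i ∈ s | t < f i} • t = ∑ i ∈ s with t < f i, f i + #A • t := by
  have hfilter : {i ∈ s | t < f i} = {i ∈ A | t < f i} := by
    ext i
    simp only [mem_filter]
    constructor
    · rintro ⟨hi, hti⟩
      exact ⟨by_contra fun hiA => (hle i hi hiA).not_gt hti, hti⟩
    · rintro ⟨hi, hti⟩
      exact ⟨hA hi, hti⟩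
  have hconst : ∑ i ∈ A with ¬ t < f i, f i = #{i ∈ A | ¬ t < f i} • t := by
    rw [← sum_const]
    refine sum_congr rfl fun i hi => ?_
    rw [mem_filter, not_lt] at hi
    exact le_antisymm hi.2 (hge i hi.1)
  rw [hfilter, ← sum_filter_add_sum_filter_not A (t < f ·), hconst,
    ← card_filter_add_card_filter_not (s := A) (t < f ·), add_nsmul, add_comm (_ • t)]
  abel

section MapEq

variable {ι κ ν M : Type*} {s : Finset ι} {r : Finset κ} {q : Finset ν}
  {g : ι → M} {u : κ → M} {b : ν → M}

lemma card_filter_eq_add_of_map_eq (h : s.val.map g = r.val.map u + q.val.map b)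
    (P : M → Prop) [DecidablePred P] :
    #{i ∈ s | P (g i)} = #{i ∈ r | P (u i)} + #{i ∈ q | P (b i)} := by
  have hcount := congrArg (Multiset.countP P) h
  rwa [Multiset.countP_add, Multiset.countP_map, Multiset.countP_map, Multiset.countP_map]
    at hcount

lemma sum_eq_add_of_map_eq [AddCommMonoid M] (h : s.val.map g = r.val.map u + q.val.map b) :
    ∑ i ∈ s, g i = ∑ i ∈ r, u i + ∑ i ∈ q, b i := by
  rw [sum_eq_multiset_sum, sum_eq_multiset_sum, sum_eq_multiset_sum, h, Multiset.sum_add]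

lemma sum_filter_eq_add_of_map_eq [AddCommMonoid M] (h : s.val.map g = r.val.map u + q.val.map b)
    (P : M → Prop) [DecidablePred P] :
    ∑ i ∈ s with P (g i), g i
      = ∑ i ∈ r with P (u i), u i + ∑ i ∈ q with P (b i), b i := by
  apply sum_eq_add_of_map_eq
  have hfilter := congrArg (Multiset.filter P) h
  rwa [Multiset.filter_add, Multiset.filter_map, Multiset.filter_map, Multiset.filter_map]
    at hfilter

end MapEq

section Interlacing

variable {p y j k : ℕ} {u b g : ℕ → ℤ}

lemma apply_eq_of_interlace (hu : AntitoneOn u (Set.Icc 1 p)) (hb : AntitoneOn b (Set.Icc 1 y))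
    (hg : AntitoneOn g (Set.Icc 1 (p + y)))
    (hunion : (Icc 1 (p + y)).val.map g = (Icc 1 p).val.map u + (Icc 1 y).val.map b)
    (hj1 : 1 ≤ j) (hjy : j ≤ y) (hkp : k ≤ p)
    (hbefore : ∀ m < k, g (m + j) ≤ u (m + 1)) (hat : k < p → u (k + 1) < g (k + j)) :
    b j = g (k + j) := by
  set t := g (k + j)
  have hle_mono : Monotone (t ≤ ·) := fun _ _ hxz hx => hx.trans hxz
  have hlt_mono : Monotone (t < ·) := fun _ _ hxz hx => hx.trans_le hxz
  have hcard_le := card_filter_eq_add_of_map_eq hunion (t ≤ ·)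
  have hcard_lt := card_filter_eq_add_of_map_eq hunion (t < ·)
  have hg_le : k + j ≤ #{i ∈ Icc 1 (p + y) | t ≤ g i} :=
    (le_card_filter_iff hg hle_mono (by omega) (by omega)).1 le_rfl
  have hu_le : #{i ∈ Icc 1 p | t ≤ u i} ≤ k := by
    calc _ ≤ #(Icc 1 k) := card_le_card fun m hm => by
          simp only [mem_filter, mem_Icc] at hm ⊢
          refine ⟨hm.1.1, not_lt.1 fun hkm => hm.2.not_gt ?_⟩
          exact (hu ⟨by omega, by omega⟩ ⟨by omega, hm.1.2⟩ hkm).trans_lt (hat (by omega))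
      _ = k := by simp
  have hg_lt : #{i ∈ Icc 1 (p + y) | t < g i} < k + j := by
    by_contra h
    exact lt_irrefl t ((le_card_filter_iff hg hlt_mono (by omega) (by omega)).2 (not_lt.1 h))
  have hu_lt : #{i ∈ Icc 1 (p + y) | t < g i} + 1 - j ≤ #{i ∈ Icc 1 p | t < u i} := by
    -- each `g (m + j) > t` with `m + j ≤ N` lies below `u (m + 1)`
    set N := #{i ∈ Icc 1 (p + y) | t < g i}
    rcases Nat.lt_or_ge N j with hNj | hjN
    · omega
    have hgN : t < g (N - j + j) :=
      (le_card_filter_iff hg hlt_mono (by omega) (by omega)).2 (by omega)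
    have huN : t < u (N - j + 1) := hgN.trans_le (hbefore (N - j) (by omega))
    have := (le_card_filter_iff hu hlt_mono (by omega) (by omega)).1 huN
    omega
  refine le_antisymm (not_lt.1 fun hbj => ?_)
    ((le_card_filter_iff hb hle_mono hj1 hjy).2 (by omega))
  have := (le_card_filter_iff hb hlt_mono hj1 hjy).1 hbj
  omega

/-- `k + j` plays the role of `h j`: `hbefore` and `hat` are what its minimality says. -/
theorem sum_Icc_eq_of_interlace (hu : AntitoneOn u (Set.Icc 1 p))
    (hb : AntitoneOn b (Set.Icc 1 y)) (hg : AntitoneOn g (Set.Icc 1 (p + y)))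
    (hunion : (Icc 1 (p + y)).val.map g = (Icc 1 p).val.map u + (Icc 1 y).val.map b)
    (hj1 : 1 ≤ j) (hjy : j ≤ y) (hkp : k ≤ p)
    (hbefore : ∀ m < k, g (m + j) ≤ u (m + 1)) (hat : k < p → u (k + 1) < g (k + j)) :
    ∑ i ∈ Icc 1 (k + j), g i = ∑ i ∈ Icc 1 k, u i + ∑ i ∈ Icc 1 j, b i := by
  set t := g (k + j)
  have hbj : b j = t := apply_eq_of_interlace hu hb hg hunion hj1 hjy hkp hbefore hat
  have hg_sum := sum_add_card_filter_lt_nsmul (s := Icc 1 (p + y)) (A := Icc 1 (k + j)) (t := t)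
    (Icc_subset_Icc_right (by omega))
    (fun i hi => hg (by grind) (by grind) (mem_Icc.1 hi).2)
    (fun i hi hiA => hg (by grind) (by grind) (by grind))
  have hu_sum := sum_add_card_filter_lt_nsmul (s := Icc 1 p) (A := Icc 1 k) (t := t)
    (Icc_subset_Icc_right hkp)
    (fun m hm => by
      rw [mem_Icc] at hm
      calc t ≤ g (m - 1 + j) := hg (by grind) (by grind) (by omega)
        _ ≤ u m := by simpa [Nat.sub_add_cancel hm.1] using hbefore (m - 1) (by omega))
    (fun m hm hmA => (hu (by grind) (by grind) (by grind)).trans (hat (by grind)).le)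
  have hb_sum := sum_add_card_filter_lt_nsmul (s := Icc 1 y) (A := Icc 1 j) (t := t)
    (Icc_subset_Icc_right hjy)
    (fun m hm => hbj ▸ hb (by grind) (by grind) (mem_Icc.1 hm).2)
    (fun m hm hmA => hbj ▸ hb (by grind) (by grind) (by grind))
  have hsum_lt := sum_filter_eq_add_of_map_eq hunion (t < ·)
  have hcard_lt := card_filter_eq_add_of_map_eq hunion (t < ·)
  simp only [Nat.card_Icc, Nat.add_sub_cancel, nsmul_eq_mul, hcard_lt, hsum_lt]
    at hg_sum hu_sum hb_sum
  push_cast at hg_sum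
  linear_combination hg_sum - hu_sum - hb_sum

end Interlacing

lemma apply_add_le_of_map_eq {p y i : ℕ} {u b g : ℕ → ℤ} (hu : AntitoneOn u (Set.Icc 1 p))
    (hg : AntitoneOn g (Set.Icc 1 (p + y)))
    (hunion : (Icc 1 (p + y)).val.map g = (Icc 1 p).val.map u + (Icc 1 y).val.map b)
    (hi1 : 1 ≤ i) (hip : i ≤ p) : g (i + y) ≤ u i := by
  have hmono : Monotone (g (i + y) ≤ ·) := fun _ _ hxz hx => hx.trans hxz
  have hg_le := (le_card_filter_iff hg hmono (by omega) (by omega)).1 le_rfl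
  have hb_le : #{m ∈ Icc 1 y | g (i + y) ≤ b m} ≤ y :=
    (card_filter_le _ _).trans (by simp)
  have hcard := card_filter_eq_add_of_map_eq hunion (g (i + y) ≤ ·)
  exact (le_card_filter_iff hu hmono hi1 hip).2 (by omega)

/-- For non-increasing integer sequences `u` (length `p`) and `b` (length `y`),
their decreasingly ordered union `g = u ∪ b` satisfies `g ≺' (u, b)`. -/
theorem stmt3 (p y : ℕ) (u b g : ℕ → ℤ)
    (hu : ∀ i, 1 ≤ i → i < p → u (i + 1) ≤ u i)
    (hb : ∀ i, 1 ≤ i → i < y → b (i + 1) ≤ b i)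
    (hg : ∀ i, 1 ≤ i → i < p + y → g (i + 1) ≤ g i)
    (hunion : (Finset.Icc 1 (p + y)).val.map g
      = (Finset.Icc 1 p).val.map u + (Finset.Icc 1 y).val.map b) :
    GenMaj p y u b g := by
  replace hu := antitoneOn_Icc_one_of_succ_le hu
  replace hb := antitoneOn_Icc_one_of_succ_le hb
  replace hg := antitoneOn_Icc_one_of_succ_le hg
  refine ⟨fun i => apply_add_le_of_map_eq hu hg hunion, fun j hj1 hjy => ?_,
    sum_eq_add_of_map_eq hunion⟩
  set S := {i : ℕ | j ≤ i ∧ (p < i - j + 1 ∨ u (i - j + 1) < g i)}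
  have hpj : p + j ∈ S := ⟨by omega, Or.inl (by omega)⟩
  have hH : sInf S ∈ S := Nat.sInf_mem ⟨_, hpj⟩
  have hsum := sum_Icc_eq_of_interlace (k := sInf S - j) hu hb hg hunion hj1 hjy
    (by have := Nat.sInf_le hpj; omega)
    (fun m hm => by
      have hmS := Nat.notMem_of_lt_sInf (show m + j < sInf S by omega)
      simp only [S, Set.mem_ofPred_eq, Nat.add_sub_cancel, not_and, not_or, not_lt] at hmS
      exact (hmS (by omega)).2)
    (fun hk => by
      rw [Nat.sub_add_cancel hH.1]
      exact hH.2.resolve_left (by omega))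
  rw [Nat.sub_add_cancel hH.1] at hsum
  rw [hsum, add_sub_cancel_left]
end

section
/- Let α_1, …, α_r and β_1, …, β_{r+x} be non-decreasing chains of divisibility of monic polynomials (α_1 ∣ ⋯ ∣ α_r and β_1 ∣ ⋯ ∣ β_{r+x}) over a field, with the convention α_i = 1 for i ≤ 0. Then Σ_{i=1}^{r+x} deg(lcm(α_{i−x}, β_i)) − Σ_{i=1}^{r+x} deg(β_i) ≥ max{ Σ_{i=1}^{r} deg(α_i) − Σ_{i=1}^{r+x} deg(β_i), 0 }. -/
open scoped Classical

/-! Each `lcm(α_{i-x}, β_i)` is divisible by both `α_{i-x}` and `β_i`, so the sum of the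
degrees of the lcm's dominates both `Σ deg β_i` and `Σ_i deg α_{i-x}`, and the latter is
`Σ deg α_i` because the padding `α_j = 1` (`j ≤ 0`) has degree `0`. -/

open Polynomial Finset

lemma EuclideanDomain.lcm_ne_zero {R : Type*} [EuclideanDomain R] [DecidableEq R] {a b : R}
    (ha : a ≠ 0) (hb : b ≠ 0) : lcm a b ≠ 0 := fun h ↦
  (lcm_eq_zero_iff.mp h).elim ha hb

namespace Polynomial

variable {F : Type*} [Field F] {p q : F[X]}

lemma natDegree_le_natDegree_lcm_left (hp : p ≠ 0) (hq : q ≠ 0) :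
    p.natDegree ≤ (EuclideanDomain.lcm p q).natDegree :=
  natDegree_le_of_dvd (EuclideanDomain.dvd_lcm_left p q) (EuclideanDomain.lcm_ne_zero hp hq)

lemma natDegree_le_natDegree_lcm_right (hp : p ≠ 0) (hq : q ≠ 0) :
    q.natDegree ≤ (EuclideanDomain.lcm p q).natDegree :=
  natDegree_le_of_dvd (EuclideanDomain.dvd_lcm_right p q) (EuclideanDomain.lcm_ne_zero hp hq)

end Polynomial

lemma Finset.sum_Icc_le_sum_Icc_add_sub {M : Type*} [AddCommMonoid M] [PartialOrder M]
    [IsOrderedAddMonoid M] (f : ℤ → M) (hf : ∀ i, 0 ≤ f i) (a b : ℤ) (x : ℕ) :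
    ∑ i ∈ Icc a b, f i ≤ ∑ i ∈ Icc a (b + x), f (i - x) := by
  have hshift : ∑ i ∈ Icc a (b + x), f (i - x) = ∑ j ∈ Icc (a - x) b, f j :=
    sum_nbij' (· - (x : ℤ)) (· + (x : ℤ)) (by intro; simp only [mem_Icc]; omega)
      (by intro; simp only [mem_Icc]; omega) (by intro; simp) (by intro; simp) (by intro; simp)
  rw [hshift]
  exact sum_le_sum_of_subset_of_nonneg (Icc_subset_Icc (by omega) le_rfl) fun i _ _ ↦ hf i

theorem stmt4_general (F : Type*) [Field F] (r x : ℕ) (α β : ℤ → Polynomial F)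
    (hα1 : ∀ i : ℤ, i < 1 → α i = 1)
    (hαm : ∀ i : ℤ, 1 ≤ i → i ≤ (r : ℤ) → (α i).Monic)
    (hβm : ∀ i : ℤ, 1 ≤ i → i ≤ (r : ℤ) + x → (β i).Monic) :
    max (∑ i ∈ Finset.Icc (1 : ℤ) (r : ℤ), ((α i).natDegree : ℤ)
          - ∑ i ∈ Finset.Icc (1 : ℤ) ((r : ℤ) + x), ((β i).natDegree : ℤ)) 0
      ≤ ∑ i ∈ Finset.Icc (1 : ℤ) ((r : ℤ) + x), ((EuclideanDomain.lcm (α (i - x)) (β i)).natDegree : ℤ)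
        - ∑ i ∈ Finset.Icc (1 : ℤ) ((r : ℤ) + x), ((β i).natDegree : ℤ) := by
  have hne : ∀ i ∈ Icc (1 : ℤ) (r + x), α (i - x) ≠ 0 ∧ β i ≠ 0 := by
    intro i hi
    rw [mem_Icc] at hi
    refine ⟨?_, (hβm i hi.1 hi.2).ne_zero⟩
    rcases lt_or_ge (i - x) 1 with h | h
    · simp [hα1 _ h]
    · exact (hαm _ h (by omega)).ne_zero
  set L :=
    ∑ i ∈ Icc (1 : ℤ) (r + x), ((EuclideanDomain.lcm (α (i - x)) (β i)).natDegree : ℤ)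
  have hβ_le : ∑ i ∈ Icc (1 : ℤ) (r + x), ((β i).natDegree : ℤ) ≤ L :=
    sum_le_sum fun i hi ↦ by
      exact_mod_cast natDegree_le_natDegree_lcm_right (hne i hi).1 (hne i hi).2
  have hα_le : ∑ i ∈ Icc (1 : ℤ) r, ((α i).natDegree : ℤ) ≤ L :=
    (sum_Icc_le_sum_Icc_add_sub _ (fun _ ↦ by positivity) 1 r x).trans <|
      sum_le_sum fun i hi ↦ by
        exact_mod_cast natDegree_le_natDegree_lcm_left (hne i hi).1 (hne i hi).2
  exact max_le (by omega) (by omega)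

/-- For divisibility chains of monic polynomials `α₁ ∣ ⋯ ∣ α_r` and
`β₁ ∣ ⋯ ∣ β_{r+x}` (with `α_i = 1` for `i < 1`),
`Σ deg(lcm(α_{i-x}, β_i)) − Σ deg(β_i) ≥ max(Σ deg(α_i) − Σ deg(β_i), 0)`. -/
theorem stmt4 (F : Type*) [Field F] (r x : ℕ) (α β : ℤ → Polynomial F)
    (hα1 : ∀ i : ℤ, i < 1 → α i = 1)
    (hαm : ∀ i : ℤ, 1 ≤ i → i ≤ (r : ℤ) → (α i).Monic)
    (hαchain : ∀ i : ℤ, 1 ≤ i → i < (r : ℤ) → α i ∣ α (i + 1))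
    (hβm : ∀ i : ℤ, 1 ≤ i → i ≤ (r : ℤ) + x → (β i).Monic)
    (hβchain : ∀ i : ℤ, 1 ≤ i → i < (r : ℤ) + x → β i ∣ β (i + 1)) :
    max (∑ i ∈ Finset.Icc (1 : ℤ) (r : ℤ), ((α i).natDegree : ℤ)
          - ∑ i ∈ Finset.Icc (1 : ℤ) ((r : ℤ) + x), ((β i).natDegree : ℤ)) 0
      ≤ ∑ i ∈ Finset.Icc (1 : ℤ) ((r : ℤ) + x), ((EuclideanDomain.lcm (α (i - x)) (β i)).natDegree : ℤ)
        - ∑ i ∈ Finset.Icc (1 : ℤ) ((r : ℤ) + x), ((β i).natDegree : ℤ) :=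
  stmt4_general F r x α β hα1 hαm hβm
end

section
/- Let α_1 ∣ ⋯ ∣ α_r and β_1 ∣ ⋯ ∣ β_{r+x} be chains of monic polynomials over a field, with x, z integers, 0 ≤ x ≤ z, satisfying the interlacing condition β_i ∣ α_i ∣ β_{i+z} for 1 ≤ i ≤ r (with β_j = 0 for j > r+x, and any polynomial divides 0). Then Σ_{i=1}^{r+x} deg(β_i) ≥ Σ_{i=1}^{r+x−z} deg(α_i); equivalently, Σ_{i=1}^{r} deg(α_i) − Σ_{i=1}^{r+x} deg(β_i) ≤ Σ_{i=r+x−z+1}^{r} deg(α_i). -/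
/-!
Since `α_i ∣ β_{i+z}` and `β_{i+z} ≠ 0` for `i ≤ r + x - z` (where `i ≤ r` because `x ≤ z`),
`deg α_i ≤ deg β_{i+z}`. Summing, the left side is bounded by `Σ_{j=1+z}^{r+x} deg β_j`,
which is a partial sum of the nonnegative right side.
-/

open Finset

theorem Finset.sum_Icc_le_sum_Icc_of_le_shift {M : Type*} [AddCommMonoid M] [PartialOrder M]
    [IsOrderedAddMonoid M] {f g : ℤ → M} {m n z : ℤ} (hz : 0 ≤ z)
    (hg : ∀ i ∈ Icc m n, 0 ≤ g i) (hfg : ∀ i ∈ Icc m (n - z), f i ≤ g (i + z)) :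
    ∑ i ∈ Icc m (n - z), f i ≤ ∑ i ∈ Icc m n, g i := by
  have hshift : ∑ i ∈ Icc m (n - z), g (i + z) = ∑ j ∈ Icc (m + z) n, g j := by
    rw [← sub_add_cancel n z, ← map_add_right_Icc, sum_map, add_sub_cancel_right]
    rfl
  calc ∑ i ∈ Icc m (n - z), f i
      ≤ ∑ i ∈ Icc m (n - z), g (i + z) := sum_le_sum hfg
    _ = ∑ j ∈ Icc (m + z) n, g j := hshift
    _ ≤ ∑ i ∈ Icc m n, g i :=
      sum_le_sum_of_subset_of_nonneg (Icc_subset_Icc_left (by omega)) fun i hi _ => hg i hi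

theorem stmt5_general (F : Type*) [Field F] (r x z : ℕ) (hxz : x ≤ z)
    (α β : ℤ → Polynomial F)
    (hβm : ∀ i : ℤ, 1 ≤ i → i ≤ (r : ℤ) + x → (β i).Monic)
    (hinter2 : ∀ i : ℤ, 1 ≤ i → i ≤ (r : ℤ) → α i ∣ β (i + z)) :
    ∑ i ∈ Finset.Icc (1 : ℤ) ((r : ℤ) + x - z), ((α i).natDegree : ℤ)
      ≤ ∑ i ∈ Finset.Icc (1 : ℤ) ((r : ℤ) + x), ((β i).natDegree : ℤ) := by
  refine sum_Icc_le_sum_Icc_of_le_shift (Int.natCast_nonneg z) (fun i _ => Int.natCast_nonneg _)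
    fun i hi => ?_
  obtain ⟨hi1, hi⟩ := mem_Icc.mp hi
  have hβ_ne_zero : β (i + z) ≠ 0 := (hβm (i + z) (by omega) (by omega)).ne_zero
  exact_mod_cast Polynomial.natDegree_le_of_dvd (hinter2 i hi1 (by omega)) hβ_ne_zero

/-- If `β_i ∣ α_i ∣ β_{i+z}` for `1 ≤ i ≤ r` (with `β_j = 0` for `j > r+x`),
then `Σ_{i=1}^{r+x} deg(β_i) ≥ Σ_{i=1}^{r+x-z} deg(α_i)`. -/
theorem stmt5 (F : Type*) [Field F] (r x z : ℕ) (hxz : x ≤ z)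
    (α β : ℤ → Polynomial F)
    (hα1 : ∀ i : ℤ, i < 1 → α i = 1)
    (hαm : ∀ i : ℤ, 1 ≤ i → i ≤ (r : ℤ) → (α i).Monic)
    (hαchain : ∀ i : ℤ, 1 ≤ i → i < (r : ℤ) → α i ∣ α (i + 1))
    (hβ1 : ∀ i : ℤ, i < 1 → β i = 1)
    (hβm : ∀ i : ℤ, 1 ≤ i → i ≤ (r : ℤ) + x → (β i).Monic)
    (hβchain : ∀ i : ℤ, 1 ≤ i → i < (r : ℤ) + x → β i ∣ β (i + 1))
    (hβ0 : ∀ i : ℤ, (r : ℤ) + x < i → β i = 0)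
    (hinter1 : ∀ i : ℤ, 1 ≤ i → i ≤ (r : ℤ) → β i ∣ α i)
    (hinter2 : ∀ i : ℤ, 1 ≤ i → i ≤ (r : ℤ) → α i ∣ β (i + z)) :
    ∑ i ∈ Finset.Icc (1 : ℤ) ((r : ℤ) + x - z), ((α i).natDegree : ℤ)
      ≤ ∑ i ∈ Finset.Icc (1 : ℤ) ((r : ℤ) + x), ((β i).natDegree : ℤ) :=
  stmt5_general F r x z hxz α β hβm hinter2
end

section
/- Fix integers r ≥ 0, x ≥ 0 and non-decreasing non-negative integer sequences e_1 ≤ ⋯ ≤ e_r, f_1 ≤ ⋯ ≤ f_{r+x} (conventions: e_i = 0 for i < 1). Suppose V is an integer with V ≥ Σ_{i=1}^{r+x} max{e_{i−x}, f_i} − Σ_{i=1}^{r+x} f_i. Then the sequence (a_j)_{j=1}^{x} defined by a_1 = V + Σ_{i=1}^{r+x} f_i − Σ_{i=1}^{r+x−1} max{e_{i−x+1}, f_i} − d and a_j = Σ_{i=1}^{r+x−j+1} max{e_{i−x+j−1}, f_i} − Σ_{i=1}^{r+x−j} max{e_{i−x+j}, f_i} − d for 2 ≤ j ≤ x (where d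 is any fixed integer) is non-increasing: a_1 ≥ a_2 ≥ ⋯ ≥ a_x. -/
/-!
Put `D k = ∑_{i=1}^{r+x-k} max{e_{i-x+k}, f_i}`. Then `a_j = D (j-1) - D j - d` for `j ≥ 2`, and the
bound on `V` gives `a_1 ≥ D 0 - D 1 - d`, so it suffices that `D` is convex on `[0, x)`. Because `max`
is submodular, so is `(l, i) ↦ max{e_l, f_i}` for monotone `e` and `f`; summing this along the
diagonal `l = i - x + k` yields `2 D k ≤ D (k-1) + D (k+1)` up to two boundary terms, one handled by
`e = 0` below `1` (as `k < x`), the other by the monotonicity of `f`.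
-/

open Finset

theorem max_add_max_le_max_add_max {α : Type*} [AddCommMonoid α] [LinearOrder α]
    [IsOrderedAddMonoid α] {a b u v : α} (hab : a ≤ b) (huv : u ≤ v) :
    max a u + max b v ≤ max b u + max a v := by
  rcases le_total b u with hbu | hub
  · rw [max_eq_right (hab.trans hbu), max_eq_right (hbu.trans huv), max_eq_right hbu,
      max_eq_right (hab.trans (hbu.trans huv))]
  rcases le_total v a with hva | hav
  · rw [max_eq_left (huv.trans hva), max_eq_left (hva.trans hab), max_eq_left hub,
      max_eq_left hva, add_comm]
  calc max a u + max b v ≤ min b v + max b v :=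
        add_le_add_left (max_le (le_min hab hav) (le_min hub huv)) _
    _ = max b u + max a v := by rw [min_add_max, max_eq_left hub, max_eq_right hav]

theorem sum_Ico_comp_add_one {M : Type*} [AddCommMonoid M] (φ : ℤ → M) (a b : ℤ) :
    ∑ i ∈ Ico a b, φ (i + 1) = ∑ i ∈ Ioc a b, φ i := by
  rw [sum_Ico_add', Ico_add_one_add_one_eq_Ioc]

noncomputable def diagSum (G : ℤ → ℤ → ℤ) (n k : ℤ) : ℤ :=
  ∑ i ∈ Icc 1 (n - k), G k i

theorem two_mul_diagSum_le (G : ℤ → ℤ → ℤ) {n k : ℤ} (hk : k < n)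
    (hstep : ∀ i ∈ Ico 1 (n - k), G k i + G k (i + 1) ≤ G (k + 1) i + G (k - 1) (i + 1))
    (hfirst : G k 1 ≤ G (k - 1) 1) (hlast : G k (n - k) ≤ G (k - 1) (n - k + 1)) :
    2 * diagSum G n k ≤ diagSum G n (k - 1) + diagSum G n (k + 1) := by
  have hsum := sum_le_sum hstep
  rw [sum_add_distrib, sum_add_distrib, sum_Ico_comp_add_one (G k),
    sum_Ico_comp_add_one (G (k - 1))] at hsum
  have hk' : 1 ≤ n - k := by omega
  have hD : diagSum G n k = ∑ i ∈ Ico 1 (n - k), G k i + G k (n - k) :=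
    (sum_Ico_add_eq_sum_Icc hk').symm
  have hD' : diagSum G n k = G k 1 + ∑ i ∈ Ioc 1 (n - k), G k i :=
    (add_sum_Ioc_eq_sum_Icc hk').symm
  have hDsucc : diagSum G n (k + 1) = ∑ i ∈ Ico 1 (n - k), G (k + 1) i := by
    rw [diagSum, sub_add_eq_sub_sub, Icc_sub_one_right_eq_Ico]
  have hDpred : diagSum G n (k - 1) =
      G (k - 1) 1 + ∑ i ∈ Ioc 1 (n - k), G (k - 1) i + G (k - 1) (n - k + 1) := by
    rw [diagSum, sub_sub_eq_add_sub, add_sub_right_comm, ← sum_Ico_add_eq_sum_Icc (by omega),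
      Ico_add_one_right_eq_Icc, ← add_sum_Ioc_eq_sum_Icc hk']
  linarith

theorem two_mul_diagSum_max_le {e f : ℤ → ℤ} {r x k : ℤ} (he0 : ∀ i < 1, e i = 0)
    (he : ∀ i < r, e i ≤ e (i + 1)) (hf : ∀ i, 1 ≤ i → i < r + x → f i ≤ f (i + 1))
    (hr : 0 ≤ r) (hk : 1 ≤ k) (hkx : k < x) :
    2 * diagSum (fun k i => max (e (i - x + k)) (f i)) (r + x) k ≤
      diagSum (fun k i => max (e (i - x + k)) (f i)) (r + x) (k - 1) +
        diagSum (fun k i => max (e (i - x + k)) (f i)) (r + x) (k + 1) := by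
  refine two_mul_diagSum_le _ (by omega) (fun i hi => ?_) ?_ ?_
  · rw [mem_Ico] at hi
    have := max_add_max_le_max_add_max (he (i - x + k) (by omega)) (hf i hi.1 (by omega))
    ring_nf at this ⊢
    exact this
  · rw [he0 _ (by omega), he0 _ (by omega)]
  · exact max_le_max (le_of_eq (congrArg e (by ring))) (hf _ (by omega) (by omega))

theorem stmt10_general (r x : ℕ) (d V : ℤ) (e f : ℤ → ℤ)
    (he0 : ∀ i : ℤ, i < 1 → e i = 0)
    (henn : ∀ i : ℤ, 0 ≤ e i)
    (hemono : ∀ i : ℤ, 1 ≤ i → i < (r : ℤ) → e i ≤ e (i + 1))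
    (hfmono : ∀ i : ℤ, 1 ≤ i → i < (r : ℤ) + x → f i ≤ f (i + 1))
    (hV : ∑ i ∈ Finset.Icc (1 : ℤ) ((r : ℤ) + x), max (e (i - x)) (f i)
        - ∑ i ∈ Finset.Icc (1 : ℤ) ((r : ℤ) + x), f i ≤ V)
    (a : ℕ → ℤ)
    (ha1 : 1 ≤ x → a 1 = V + ∑ i ∈ Finset.Icc (1 : ℤ) ((r : ℤ) + x), f i
        - (∑ i ∈ Finset.Icc (1 : ℤ) ((r : ℤ) + x - 1), max (e (i - x + 1)) (f i)) - d)
    (haj : ∀ j : ℕ, 2 ≤ j → j ≤ x →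
      a j = (∑ i ∈ Finset.Icc (1 : ℤ) ((r : ℤ) + x - j + 1), max (e (i - x + j - 1)) (f i))
        - (∑ i ∈ Finset.Icc (1 : ℤ) ((r : ℤ) + x - j), max (e (i - x + j)) (f i)) - d) :
    ∀ j : ℕ, 1 ≤ j → j < x → a (j + 1) ≤ a j := by
  set G : ℤ → ℤ → ℤ := fun k i => max (e (i - x + k)) (f i)
  set D : ℤ → ℤ := diagSum G (r + x)
  have hconvex : ∀ k : ℤ, 1 ≤ k → k < x → 2 * D k ≤ D (k - 1) + D (k + 1) := fun k hk hkx =>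
    two_mul_diagSum_max_le he0
      (fun i hi => (lt_or_ge i 1).elim (fun h => he0 i h ▸ henn _) (fun h => hemono i h hi))
      hfmono (by positivity) hk hkx
  have hsucc : ∀ j : ℕ, 1 ≤ j → j < x → a (j + 1) = D j - D (j + 1) - d := by
    intro j hj hjx
    rw [haj (j + 1) (by omega) (by omega)]
    push_cast
    simp only [D, diagSum, G]
    congr 2
    exact sum_congr (by congr 1; ring) fun i _ => by ring_nf
  have hlow : ∀ j : ℕ, 1 ≤ j → j < x → D (j - 1) - D j - d ≤ a j := by
    intro j hj hjx
    obtain rfl | hj2 : j = 1 ∨ 2 ≤ j := by omega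
    · have hD0 : D 0 = ∑ i ∈ Icc (1 : ℤ) (r + x), max (e (i - x)) (f i) := by
        simp only [D, diagSum, G, sub_zero, add_zero]
      have hD1 : D 1 = ∑ i ∈ Icc (1 : ℤ) (r + x - 1), max (e (i - x + 1)) (f i) := rfl
      rw [ha1 (by omega), Nat.cast_one, sub_self]
      linarith
    · obtain ⟨k, rfl⟩ : ∃ k, j = k + 1 := ⟨j - 1, by omega⟩
      rw [hsucc k (by omega) (by omega)]
      push_cast
      rw [add_sub_cancel_right]
  intro j hj hjx
  have := hconvex j (by omega) (by omega)
  rw [hsucc j hj hjx]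
  linarith [hlow j hj hjx]

/-- The sequence `(a_j)` built from `V`, `e`, `f`, `d` is non-increasing. -/
theorem stmt10 (r x : ℕ) (d V : ℤ) (e f : ℤ → ℤ)
    (he0 : ∀ i : ℤ, i < 1 → e i = 0)
    (henn : ∀ i : ℤ, 0 ≤ e i)
    (hemono : ∀ i : ℤ, 1 ≤ i → i < (r : ℤ) → e i ≤ e (i + 1))
    (hfnn : ∀ i : ℤ, 0 ≤ f i)
    (hfmono : ∀ i : ℤ, 1 ≤ i → i < (r : ℤ) + x → f i ≤ f (i + 1))
    (hV : ∑ i ∈ Finset.Icc (1 : ℤ) ((r : ℤ) + x), max (e (i - x)) (f i)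
        - ∑ i ∈ Finset.Icc (1 : ℤ) ((r : ℤ) + x), f i ≤ V)
    (a : ℕ → ℤ)
    (ha1 : 1 ≤ x → a 1 = V + ∑ i ∈ Finset.Icc (1 : ℤ) ((r : ℤ) + x), f i
        - (∑ i ∈ Finset.Icc (1 : ℤ) ((r : ℤ) + x - 1), max (e (i - x + 1)) (f i)) - d)
    (haj : ∀ j : ℕ, 2 ≤ j → j ≤ x →
      a j = (∑ i ∈ Finset.Icc (1 : ℤ) ((r : ℤ) + x - j + 1), max (e (i - x + j - 1)) (f i))
        - (∑ i ∈ Finset.Icc (1 : ℤ) ((r : ℤ) + x - j), max (e (i - x + j)) (f i)) - d) :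
    ∀ j : ℕ, 1 ≤ j → j < x → a (j + 1) ≤ a j :=
  stmt10_general r x d V e f he0 henn hemono hfmono hV a ha1 haj
end

section
/- Let c = (c_1 ≥ … ≥ c_{n−r}) be a non-increasing sequence of non-negative integers, let 0 ≤ x ≤ n − r, and define d = (c_{x+1}, …, c_{n−r}) (the truncation). Suppose (g_j) is any sequence with Σ_{i=1}^{j} c_i ≤ Σ_{i=1}^{j} g_i for 1 ≤ j ≤ x and Σ_{i=1}^{x} c_i = Σ_{i=1}^{x} g_i. Then c ≺' (d, g') for g' the non-increasing rearrangement of (g_1, …, g_x); in particular, taking g = (c_1, …, c_x), c ≺' (d, (c_1, …, c_x)). -/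
open Finset

lemma antitoneOn_Icc_of_succ_le {α : Type*} [Preorder α] {f : ℕ → α} {a b : ℕ}
    (h : ∀ i, a ≤ i → i < b → f (i + 1) ≤ f i) : AntitoneOn f (Set.Icc a b) :=
  antitoneOn_of_add_one_le Set.ordConnected_Icc fun i _ hi hi' => h i hi.1 hi'.2

lemma sum_Icc_one_add {M : Type*} [AddCommMonoid M] (f : ℕ → M) (j u : ℕ) :
    ∑ i ∈ Icc 1 (j + u), f i = ∑ i ∈ Icc 1 j, f i + ∑ i ∈ Icc 1 u, f (i + j) := by
  induction u with
  | zero => simp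
  | succ u ih =>
    rw [← add_assoc, sum_Icc_succ_top (by omega), ih, sum_Icc_succ_top (by omega), add_assoc,
      add_right_comm u 1 j, add_comm u j]

lemma sum_Icc_one_le_of_antitoneOn_rearrangement {α : Type*} [AddCommGroup α] [LinearOrder α]
    [IsOrderedAddMonoid α] {f f' : ℕ → α} {x j : ℕ} (hf' : AntitoneOn f' (Set.Icc 1 x))
    (hperm : (Icc 1 x).val.map f' = (Icc 1 x).val.map f) (hj : 1 ≤ j) (hjx : j ≤ x) :
    ∑ i ∈ Icc 1 j, f i ≤ ∑ i ∈ Icc 1 j, f' i := by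
  -- With `t = f' j`, the sum of `max (· - t) 0` over `1..x` is rearrangement-invariant and
  -- bounds the first `j` terms of `f` from above, while for `f'` it equals `∑_{i ≤ j} (f' i - t)`.
  set t := f' j
  have hpos_sum : ∑ i ∈ Icc 1 x, max (f i - t) 0 = ∑ i ∈ Icc 1 x, max (f' i - t) 0 := by
    simp only [Finset.sum, ← Function.comp_apply (f := fun v => max (v - t) 0),
      ← Multiset.map_map, hperm]
  have hpos_tail : ∀ i ∈ Icc 1 x, i ∉ Icc 1 j → max (f' i - t) 0 = 0 := by
    intro i hi hij
    simp only [mem_Icc] at hi hij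
    exact max_eq_right (sub_nonpos.2 (hf' ⟨hj, hjx⟩ hi (by omega)))
  have hpos_head : ∀ i ∈ Icc 1 j, max (f' i - t) 0 = f' i - t := by
    intro i hi
    simp only [mem_Icc] at hi
    exact max_eq_left (sub_nonneg.2 (hf' ⟨hi.1, by omega⟩ ⟨hj, hjx⟩ hi.2))
  calc ∑ i ∈ Icc 1 j, f i
      ≤ ∑ i ∈ Icc 1 j, (max (f i - t) 0 + t) :=
        sum_le_sum fun i _ => sub_le_iff_le_add.1 (le_max_left _ _)
    _ = ∑ i ∈ Icc 1 j, max (f i - t) 0 + j • t := by simp [sum_add_distrib]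
    _ ≤ ∑ i ∈ Icc 1 x, max (f i - t) 0 + j • t := by
        gcongr ?_ + _
        exact sum_le_sum_of_subset_of_nonneg (Icc_subset_Icc_right hjx) fun _ _ _ =>
          le_max_right _ _
    _ = ∑ i ∈ Icc 1 j, (f' i - t) + j • t := by
        rw [hpos_sum, ← sum_subset (Icc_subset_Icc_right hjx) hpos_tail, sum_congr rfl hpos_head]
    _ = ∑ i ∈ Icc 1 j, f' i := by simp [sum_sub_distrib]

lemma sum_Icc_sub_sum_Icc_shift_le {c : ℕ → ℤ} {j h x : ℕ} (hjh : j ≤ h)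
    (hc : AntitoneOn c (Set.Icc j h)) (hrun : ∀ i, j ≤ i → i < h → c i ≤ c (i - j + 1 + x)) :
    ∑ i ∈ Icc 1 h, c i - ∑ i ∈ Icc 1 (h - j), c (i + x) ≤ ∑ i ∈ Icc 1 j, c i := by
  obtain ⟨u, rfl⟩ := Nat.exists_eq_add_of_le hjh
  have hterm : ∀ k ∈ Icc 1 u, c (k + j) ≤ c (k + x) := by
    intro k hk
    simp only [mem_Icc] at hk
    calc c (k + j) ≤ c (k - 1 + j) := hc ⟨by omega, by omega⟩ ⟨by omega, by omega⟩ (by omega)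
      _ ≤ c (k + x) := by
        have := hrun (k - 1 + j) (by omega) (by omega)
        rwa [show k - 1 + j - j + 1 = k by omega] at this
  rw [sum_Icc_one_add, Nat.add_sub_cancel_left]
  linarith [sum_le_sum hterm]

lemma genMaj_truncation {N x : ℕ} {c a : ℕ → ℤ} (hc : AntitoneOn c (Set.Icc 1 N))
    (ha : ∀ j, 1 ≤ j → j ≤ x → ∑ i ∈ Icc 1 j, c i ≤ ∑ i ∈ Icc 1 j, a i)
    (haeq : ∑ i ∈ Icc 1 x, c i = ∑ i ∈ Icc 1 x, a i) :
    GenMaj (N - x) x (fun i => c (i + x)) a c := by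
  refine ⟨fun _ _ _ => le_rfl, fun j hj hjx => ?_, ?_⟩
  · have hmem : N - x + j ∈
        {i : ℕ | j ≤ i ∧ (N - x < i - j + 1 ∨ c (i - j + 1 + x) < c i)} :=
      ⟨by omega, Or.inl (by omega)⟩
    have hjh := (Nat.sInf_mem ⟨_, hmem⟩).1
    have hhN := Nat.sInf_le hmem
    refine (sum_Icc_sub_sum_Icc_shift_le hjh ?_ fun i hji hih => ?_).trans (ha j hj hjx)
    · rcases hjh.eq_or_lt with heq | hlt
      · exact (Set.subsingleton_Icc_of_ge heq.ge).antitoneOn c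
      · exact hc.mono (Set.Icc_subset_Icc hj (by omega))
    · have := Nat.notMem_of_lt_sInf hih
      simp only [Set.mem_ofPred_eq, not_and, not_or, not_lt] at this
      exact (this hji).2
  · rw [add_comm (N - x) x, sum_Icc_one_add, haeq, add_comm]

theorem stmt11_general (N x : ℕ) (c : ℕ → ℤ)
    (hcmono : ∀ i, 1 ≤ i → i < N → c (i + 1) ≤ c i)
    (g g' : ℕ → ℤ)
    (hgsum : ∀ j, 1 ≤ j → j ≤ x →
      ∑ i ∈ Finset.Icc 1 j, c i ≤ ∑ i ∈ Finset.Icc 1 j, g i)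
    (hgeq : ∑ i ∈ Finset.Icc 1 x, c i = ∑ i ∈ Finset.Icc 1 x, g i)
    (hg'mono : ∀ i, 1 ≤ i → i < x → g' (i + 1) ≤ g' i)
    (hg'perm : (Finset.Icc 1 x).val.map g' = (Finset.Icc 1 x).val.map g) :
    GenMaj (N - x) x (fun i => c (i + x)) g' c ∧
    GenMaj (N - x) x (fun i => c (i + x)) c c := by
  have hc : AntitoneOn c (Set.Icc 1 N) := antitoneOn_Icc_of_succ_le hcmono
  have hg' : AntitoneOn g' (Set.Icc 1 x) := antitoneOn_Icc_of_succ_le hg'mono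
  have hsum : ∑ i ∈ Icc 1 x, g' i = ∑ i ∈ Icc 1 x, g i := congrArg Multiset.sum hg'perm
  refine ⟨genMaj_truncation hc (fun j hj hjx => ?_) (hgeq.trans hsum.symm),
    genMaj_truncation hc (fun _ _ _ => le_rfl) rfl⟩
  exact (hgsum j hj hjx).trans
    (sum_Icc_one_le_of_antitoneOn_rearrangement hg' hg'perm hj hjx)

/-- If partial sums of `c` are dominated by those of `g` on `1..x` with equal
totals, then `c ≺' (d, g')` for `d` the truncation `d_i = c_{i+x}` and `g'`
the non-increasing rearrangement of `(g_1, …, g_x)`; in particular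
`c ≺' (d, (c_1, …, c_x))`. -/
theorem stmt11 (N x : ℕ) (hx : x ≤ N) (c : ℕ → ℤ)
    (hcmono : ∀ i, 1 ≤ i → i < N → c (i + 1) ≤ c i)
    (hcnn : ∀ i, 1 ≤ i → i ≤ N → 0 ≤ c i)
    (g g' : ℕ → ℤ)
    (hgsum : ∀ j, 1 ≤ j → j ≤ x →
      ∑ i ∈ Finset.Icc 1 j, c i ≤ ∑ i ∈ Finset.Icc 1 j, g i)
    (hgeq : ∑ i ∈ Finset.Icc 1 x, c i = ∑ i ∈ Finset.Icc 1 x, g i)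
    (hg'mono : ∀ i, 1 ≤ i → i < x → g' (i + 1) ≤ g' i)
    (hg'perm : (Finset.Icc 1 x).val.map g' = (Finset.Icc 1 x).val.map g) :
    GenMaj (N - x) x (fun i => c (i + x)) g' c ∧
    GenMaj (N - x) x (fun i => c (i + x)) c c :=
  stmt11_general N x c hcmono g g' hgsum hgeq hg'mono hg'perm
end

section
/- Let α_1 ∣ ⋯ ∣ α_r be a chain of monic polynomials over an algebraically closed field, let g ≥ 1 and let A be an integer with Σ_{i=r−g+2}^{r} deg(α_i) < A ≤ Σ_{i=r−g+1}^{r} deg(α_i). Set h = min{ k : A − Σ_{i=r−g+2}^{r} deg(α_i) ≤ deg(α_{k−g+1}) } (convention α_j = 1 for j < 1). Then g ≤ h ≤ r, and w := deg(α_{h−g}) + deg(α_{h−g+1}) + Σ_{i=r−g+2}^{r} deg(α_i) − A satisfies deg(α_{h−g}) ≤ w < deg(α_{h−g+1}). -/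
/-!
Write `c = A − Σ_{i=r−g+2}^{r} deg α_i > 0`. The index `h` is the first `k` at which the
shifted degree sequence `k ↦ deg α_{k−g+1}` reaches `c`: it does so at `k = r` by the upper
bound on `A`, and not before `k = g`, since below that the degrees are those of `α_j = 1`.
Minimality gives `deg α_{h−g} < c ≤ deg α_{h−g+1}`, which is the claim about `w` after
subtracting `c`.
-/

theorem Finset.sum_Icc_eq_add_sum_Icc_add_one {M : Type*} [AddCommMonoid M] (f : ℤ → M)
    {a b : ℤ} (hab : a ≤ b) :
    ∑ i ∈ Icc a b, f i = f a + ∑ i ∈ Icc (a + 1) b, f i := by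
  rw [← insert_Icc_add_one_left_eq_Icc hab, sum_insert (by simp)]

namespace ThresholdIndex

variable (d : ℤ → ℤ) {c : ℤ} {g r : ℕ}

theorem sInf_le (hr : c ≤ d (r - g + 1)) : sInf {k : ℕ | c ≤ d (k - g + 1)} ≤ r :=
  Nat.sInf_le hr

theorem le_apply_sInf (hr : c ≤ d (r - g + 1)) :
    c ≤ d ((sInf {k : ℕ | c ≤ d (k - g + 1)} : ℕ) - g + 1) :=
  Nat.sInf_mem (s := {k : ℕ | c ≤ d (k - g + 1)}) ⟨r, hr⟩

theorem le_sInf (hd : ∀ i, i < 1 → d i < c) (hr : c ≤ d (r - g + 1)) :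
    g ≤ sInf {k : ℕ | c ≤ d (k - g + 1)} := by
  by_contra! hlt
  exact (le_apply_sInf d hr).not_gt (hd _ (by omega))

theorem apply_sInf_sub_lt (hd : ∀ i, i < 1 → d i < c) :
    d ((sInf {k : ℕ | c ≤ d (k - g + 1)} : ℕ) - g) < c := by
  set h := sInf {k : ℕ | c ≤ d (k - g + 1)}
  rcases Nat.eq_zero_or_pos h with h0 | hpos
  · exact hd _ (by omega)
  · have hprev : h - 1 ∉ {k : ℕ | c ≤ d (k - g + 1)} := Nat.notMem_of_lt_sInf (by omega)
    have hidx : ((h - 1 : ℕ) : ℤ) - g + 1 = (h : ℤ) - g := by omega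
    simpa only [Set.mem_ofPred_eq, not_le, hidx] using hprev

end ThresholdIndex

theorem stmt14_general (F : Type*) [Field F] (r : ℕ)
    (α : ℤ → Polynomial F)
    (hα1 : ∀ i : ℤ, i < 1 → α i = 1)
    (g : ℕ) (hg : 1 ≤ g) (A : ℤ)
    (hA1 : ∑ i ∈ Finset.Icc ((r : ℤ) - g + 2) (r : ℤ), ((α i).natDegree : ℤ) < A)
    (hA2 : A ≤ ∑ i ∈ Finset.Icc ((r : ℤ) - g + 1) (r : ℤ), ((α i).natDegree : ℤ)) :
    let T : ℤ := ∑ i ∈ Finset.Icc ((r : ℤ) - g + 2) (r : ℤ), ((α i).natDegree : ℤ)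
    let h : ℕ := sInf {k : ℕ | A - T ≤ ((α ((k : ℤ) - g + 1)).natDegree : ℤ)}
    let w : ℤ := ((α ((h : ℤ) - g)).natDegree : ℤ)
      + ((α ((h : ℤ) - g + 1)).natDegree : ℤ) + T - A
    g ≤ h ∧ h ≤ r ∧ ((α ((h : ℤ) - g)).natDegree : ℤ) ≤ w ∧
      w < ((α ((h : ℤ) - g + 1)).natDegree : ℤ) := by
  intro T h w
  have hd : ∀ i : ℤ, i < 1 → ((α i).natDegree : ℤ) < A - T := fun i hi => by
    simpa only [hα1 i hi, Polynomial.natDegree_one, Nat.cast_zero, sub_pos] using hA1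
  have hr : A - T ≤ ((α ((r : ℤ) - g + 1)).natDegree : ℤ) := by
    rw [Finset.sum_Icc_eq_add_sum_Icc_add_one _ (by omega), add_assoc, one_add_one_eq_two] at hA2
    exact sub_le_iff_le_add.mpr hA2
  have hreach : A - T ≤ ((α ((h : ℤ) - g + 1)).natDegree : ℤ) :=
    ThresholdIndex.le_apply_sInf (fun i => ((α i).natDegree : ℤ)) hr
  have hbefore : ((α ((h : ℤ) - g)).natDegree : ℤ) < A - T :=
    ThresholdIndex.apply_sInf_sub_lt (fun i => ((α i).natDegree : ℤ)) hd
  exact ⟨ThresholdIndex.le_sInf (fun i => ((α i).natDegree : ℤ)) hd hr,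
    ThresholdIndex.sInf_le (fun i => ((α i).natDegree : ℤ)) hr, by omega, by omega⟩

/-- For a chain of monic polynomials `α_1 ∣ ⋯ ∣ α_r` over an algebraically
closed field, `g ≥ 1` and `A` with
`Σ_{i=r−g+2}^{r} deg α_i < A ≤ Σ_{i=r−g+1}^{r} deg α_i`, setting
`h = min{k : A − Σ_{i=r−g+2}^{r} deg α_i ≤ deg α_{k−g+1}}` one has `g ≤ h ≤ r`
and `w = deg α_{h−g} + deg α_{h−g+1} + Σ_{i=r−g+2}^{r} deg α_i − A` satisfies
`deg α_{h−g} ≤ w < deg α_{h−g+1}`. -/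
theorem stmt14 (F : Type*) [Field F] [IsAlgClosed F] (r : ℕ)
    (α : ℤ → Polynomial F)
    (hα1 : ∀ i : ℤ, i < 1 → α i = 1)
    (hαm : ∀ i : ℤ, 1 ≤ i → i ≤ (r : ℤ) → (α i).Monic)
    (hαchain : ∀ i : ℤ, 1 ≤ i → i < (r : ℤ) → α i ∣ α (i + 1))
    (g : ℕ) (hg : 1 ≤ g) (A : ℤ)
    (hA1 : ∑ i ∈ Finset.Icc ((r : ℤ) - g + 2) (r : ℤ), ((α i).natDegree : ℤ) < A)
    (hA2 : A ≤ ∑ i ∈ Finset.Icc ((r : ℤ) - g + 1) (r : ℤ), ((α i).natDegree : ℤ)) :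
    let T : ℤ := ∑ i ∈ Finset.Icc ((r : ℤ) - g + 2) (r : ℤ), ((α i).natDegree : ℤ)
    let h : ℕ := sInf {k : ℕ | A - T ≤ ((α ((k : ℤ) - g + 1)).natDegree : ℤ)}
    let w : ℤ := ((α ((h : ℤ) - g)).natDegree : ℤ)
      + ((α ((h : ℤ) - g + 1)).natDegree : ℤ) + T - A
    g ≤ h ∧ h ≤ r ∧ ((α ((h : ℤ) - g)).natDegree : ℤ) ≤ w ∧
      w < ((α ((h : ℤ) - g + 1)).natDegree : ℤ) :=
  stmt14_general F r α hα1 g hg A hA1 hA2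
end

section
/- Let c = (c_1 ≥ … ≥ c_N) be a non-increasing integer sequence, 0 ≤ x, and d defined by d_i = c_{i+x}. Fix 1 ≤ j ≤ x and let ĥ_j = min{ i : d_{i−j+1} < c_i } (conventions: d_i = +∞ for i < 1, d_{N−x+1} = −∞). Then j ≤ ĥ_j ≤ N − x + j, and c_{i+x−j+1} = c_i for all j ≤ i ≤ ĥ_j − 1. -/
theorem stmt18_general (N x : ℕ) (c : ℕ → ℤ)
    (hcmono : ∀ i, 1 ≤ i → i < N → c (i + 1) ≤ c i)
    (j : ℕ) (hj1 : 1 ≤ j) (hjx : j ≤ x) :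
    let h : ℕ := sInf {i : ℕ | j ≤ i ∧ (N - x < i - j + 1 ∨ c (i - j + 1 + x) < c i)}
    j ≤ h ∧ h ≤ N - x + j ∧ ∀ i, j ≤ i → i + 1 ≤ h → c (i + x + 1 - j) = c i := by
  intro h
  set S := {i : ℕ | j ≤ i ∧ (N - x < i - j + 1 ∨ c (i - j + 1 + x) < c i)}
  have hanti : AntitoneOn c (Set.Icc 1 N) :=
    antitoneOn_of_add_one_le Set.ordConnected_Icc fun a _ ha ha1 => hcmono a ha.1 ha1.2
  have hlast : N - x + j ∈ S := ⟨by omega, Or.inl (by omega)⟩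
  have hmin : h ∈ S := Nat.sInf_mem ⟨_, hlast⟩
  refine ⟨hmin.1, Nat.sInf_le hlast, fun i hji hih => ?_⟩
  obtain ⟨hfit, hge⟩ : i - j + 1 ≤ N - x ∧ c i ≤ c (i - j + 1 + x) := by
    have hout : i ∉ S := Nat.notMem_of_lt_sInf hih
    simpa only [S, Set.mem_ofPred_eq, hji, true_and, not_or, not_lt] using hout
  rw [show i + x + 1 - j = i - j + 1 + x by omega]
  exact le_antisymm (hanti ⟨by omega, by omega⟩ ⟨by omega, by omega⟩ (by omega)) hge

/-- For a non-increasing sequence `c` of length `N`, truncation `d_i = c_{i+x}`,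
and `ĥ_j = min{i : d_{i−j+1} < c_i}` (with `d_i = +∞` for `i < 1`,
`d_{N−x+1} = −∞`), one has `j ≤ ĥ_j ≤ N − x + j` and `c_{i+x−j+1} = c_i`
for `j ≤ i ≤ ĥ_j − 1`. -/
theorem stmt18 (N x : ℕ) (hx : x ≤ N) (c : ℕ → ℤ)
    (hcmono : ∀ i, 1 ≤ i → i < N → c (i + 1) ≤ c i)
    (j : ℕ) (hj1 : 1 ≤ j) (hjx : j ≤ x) :
    let h : ℕ := sInf {i : ℕ | j ≤ i ∧ (N - x < i - j + 1 ∨ c (i - j + 1 + x) < c i)}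
    j ≤ h ∧ h ≤ N - x + j ∧ ∀ i, j ≤ i → i + 1 ≤ h → c (i + x + 1 - j) = c i :=
  stmt18_general N x c hcmono j hj1 hjx
end
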